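/- Let k ≥ 3. The subgraph of Σ^{R·2}_{k,1} obtained by deleting the vertex b_2 (and its incident edges) has diameter exactly three. -/

import Mathlib

/-! Deleting `b_j` for some `2 ≤ j ≤ k` leaves `a_j` with only `a`'s as neighbours, and no `a` is
adjacent to a `c`, so `a_j` and `c_1` are at distance three. Conversely `b_1` is adjacent to every
remaining `b` and `c`, and within distance two of every `a` through `a_1`; as the `a`'s form a
clique, any two vertices are at distance at most `1 + 2`. -/

/-- The graph `Σ^{R·m}_{k,t}` on vertices `a_1,…,a_k` (`Sum.inl`), `b_1,…,b_{k+t}`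
(`Sum.inr ∘ Sum.inl`, 0-indexed) and `c_1,…,c_m` (`Sum.inr ∘ Sum.inr`, 0-indexed). -/
def sigmaRm (k t m : ℕ) : SimpleGraph (Fin k ⊕ Fin (k + t) ⊕ Fin m) :=
  SimpleGraph.fromRel fun x y =>
    match x, y with
    | Sum.inl _, Sum.inl _ => True
    | Sum.inr (Sum.inl _), Sum.inr (Sum.inl _) => True
    | Sum.inr (Sum.inr _), Sum.inr (Sum.inr _) => True
    | Sum.inl i, Sum.inr (Sum.inl j) => (j : ℕ) = (i : ℕ) ∨ ((i : ℕ) < t ∧ (j : ℕ) = k + (i : ℕ))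
    | Sum.inr (Sum.inr _), Sum.inr (Sum.inl _) => True
    | _, _ => False

namespace SimpleGraph

variable {V : Type*} {G : SimpleGraph V}

lemma ediam_le_three_of_isClique {K : Set V} (hK : G.IsClique K) {w : V}
    (hw : ∀ v ∉ K, G.edist w v ≤ 1) (hwK : ∀ v ∈ K, G.edist w v ≤ 2) : G.ediam ≤ 3 := by
  have hw₂ (v : V) : G.edist w v ≤ 2 := by
    by_cases hv : v ∈ K
    · exact hwK v hv
    · exact (hw v hv).trans (by norm_num)
  refine ediam_le_of_edist_le fun u v ↦ ?_
  by_cases hu : u ∈ K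
  · by_cases hv : v ∈ K
    · have : G.edist u v ≤ 1 := edist_le_one_iff_adj_or_eq.2 <|
        (eq_or_ne u v).symm.imp_left (hK hu hv)
      exact this.trans (by norm_num)
    · calc G.edist u v ≤ G.edist u w + G.edist w v := G.edist_triangle
        _ ≤ 2 + 1 := add_le_add (edist_comm.trans_le (hw₂ u)) (hw v hv)
        _ = 3 := by norm_num
  · calc G.edist u v ≤ G.edist u w + G.edist w v := G.edist_triangle
      _ ≤ 1 + 2 := add_le_add (edist_comm.trans_le (hw u hu)) (hw₂ v)
      _ = 3 := by norm_num

lemma three_le_edist_iff {u v : V} :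
    3 ≤ G.edist u v ↔ u ≠ v ∧ ¬ G.Adj u v ∧ G.commonNeighbors u v = ∅ := by
  rw [← two_lt_edist_iff, ← ENat.add_one_le_iff (by simp)]
  rfl

end SimpleGraph

open SimpleGraph

/-- `Σ^{R·2}_{k,1}` minus `b_{j+1}`: the index `j` is 0-based. -/
abbrev sigmaRmDeleteB (k : ℕ) (j : Fin (k + 1)) :=
  (sigmaRm k 1 2).induce {v | v ≠ Sum.inr (Sum.inl j)}

variable {k : ℕ} {j : Fin (k + 1)}

lemma sigmaRmDeleteB_ediam_le_three (hk : 0 < k) (hj : j ≠ 0) :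
    (sigmaRmDeleteB k j).ediam ≤ 3 := by
  let b₀ : {v : Fin k ⊕ Fin (k + 1) ⊕ Fin 2 | v ≠ Sum.inr (Sum.inl j)} :=
    ⟨Sum.inr (Sum.inl 0), by simpa [eq_comm] using hj⟩
  let a₀ : {v : Fin k ⊕ Fin (k + 1) ⊕ Fin 2 | v ≠ Sum.inr (Sum.inl j)} :=
    ⟨Sum.inl ⟨0, hk⟩, by simp⟩
  have hclique : (sigmaRmDeleteB k j).IsClique {v | v.1.isLeft} := by
    rintro ⟨_ | _ | _, _⟩ hu ⟨_ | _ | _, _⟩ hv huv <;> simp_all [sigmaRm]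
  refine ediam_le_three_of_isClique hclique (w := b₀) ?_ ?_
  · rintro ⟨_ | _ | _, _⟩ h <;> simp_all [edist_le_one_iff_adj_or_eq, sigmaRm, b₀, em']
  · intro v hv
    have hb₀a₀ : (sigmaRmDeleteB k j).edist b₀ a₀ ≤ 1 := by
      simp [edist_le_one_iff_adj_or_eq, sigmaRm, b₀, a₀]
    have ha₀v : (sigmaRmDeleteB k j).edist a₀ v ≤ 1 :=
      edist_le_one_iff_adj_or_eq.2 <| (eq_or_ne a₀ v).symm.imp_left (hclique rfl hv)
    calc (sigmaRmDeleteB k j).edist b₀ v ≤ _ := SimpleGraph.edist_triangle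
      _ ≤ 1 + 1 := add_le_add hb₀a₀ ha₀v
      _ = 2 := one_add_one_eq_two

lemma sigmaRmDeleteB_three_le_edist {i : Fin k} (hi : (i : ℕ) = j) (hj : j ≠ 0) (m : Fin 2) :
    3 ≤ (sigmaRmDeleteB k j).edist ⟨Sum.inl i, by simp⟩ ⟨Sum.inr (Sum.inr m), by simp⟩ := by
  rw [three_le_edist_iff]
  refine ⟨by simp, by simp [sigmaRm], ?_⟩
  ext ⟨_ | j' | _, hv⟩ <;> simp [mem_commonNeighbors, sigmaRm]
  have hj' : (j' : ℕ) ≠ j := fun h ↦ hv (Fin.ext h ▸ rfl)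
  have hj₀ : (j : ℕ) ≠ 0 := Fin.val_ne_zero_iff.2 hj
  omega

lemma sigmaRmDeleteB_ediam_eq_three (hj : j ≠ 0) (hjk : (j : ℕ) < k) :
    (sigmaRmDeleteB k j).ediam = 3 :=
  le_antisymm (sigmaRmDeleteB_ediam_le_three (by omega) hj)
    ((sigmaRmDeleteB_three_le_edist (i := ⟨j, hjk⟩) rfl hj 0).trans edist_le_ediam)

/-- The subgraph of `Σ^{R·2}_{k,1}` obtained by deleting the vertex `b_2` has diameter
exactly three. -/
theorem stmt8 (k : ℕ) (hk : 3 ≤ k) :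
    ((sigmaRm k 1 2).induce {v | v ≠ Sum.inr (Sum.inl ⟨1, by omega⟩)}).diam = 3 := by
  rw [diam, sigmaRmDeleteB_ediam_eq_three (by simp [Fin.ext_iff]) (by simp; omega)]
  rfl
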